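/- arXiv:2507.12837 — 6 statements merged into one kernel-verified Lean document; each statement's English description precedes it below -/
import Mathlib

section
/- Let n be a positive integer, η > 0, Y ∈ ℝⁿ, c ∈ ℝ, v ∈ ℝⁿ. Let K_x ∈ ℝ^{n×n} be symmetric with an orthonormal basis of eigenvectors q₁,…,q_n and corresponding eigenvalues λ₁,…,λ_n, where λ₁ > 0. Set F = c·v, E = F − Y, v' = v − (η/n)·c·(K_x E), and define Δ := (λ₁/n)·c² − 2/η. Then ‖v'‖² − ‖v‖² = ((2η + Δη²)/n)·Σ_{i=2}^{n} (λ_i²/λ₁)·⟨E, q_i⟩² + (Δη²/n)·λ₁·⟨E, q₁⟩² − (2η/n)·Σ_{i=2}^{n} λ_i·⟨E, q_i⟩² − (2η/n)·⟨K_x E, Y⟩. -/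
open Matrix

/-- Exact decomposition of the one-step change of `‖v‖²` along the eigenbasis
of the data kernel, featuring the Edge-of-Stability excess `Δ`. -/
theorem v_sq_change_eigen_decomposition
    (n : ℕ) [NeZero n] (η : ℝ) (hη : 0 < η)
    (Y : Fin n → ℝ) (c : ℝ) (v : Fin n → ℝ)
    (Kx : Matrix (Fin n) (Fin n) ℝ) (hK : Kx.IsSymm)
    (q : Fin n → Fin n → ℝ) (lam : Fin n → ℝ)
    (horth : ∀ i j, q i ⬝ᵥ q j = if i = j then (1 : ℝ) else 0)
    (heig : ∀ i, Kx.mulVec (q i) = lam i • q i)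
    (hlam1 : 0 < lam 0)
    (F E : Fin n → ℝ) (hF : F = c • v) (hE : E = F - Y)
    (v' : Fin n → ℝ) (hv' : v' = v - ((η / n) * c) • Kx.mulVec E)
    (Δ : ℝ) (hΔ : Δ = (lam 0 / n) * c ^ 2 - 2 / η) :
    v' ⬝ᵥ v' - v ⬝ᵥ v =
      ((2 * η + Δ * η ^ 2) / n) *
          ∑ i ∈ Finset.univ.erase (0 : Fin n), (lam i ^ 2 / lam 0) * (E ⬝ᵥ q i) ^ 2
        + (Δ * η ^ 2 / n) * lam 0 * (E ⬝ᵥ q 0) ^ 2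
        - (2 * η / n) * ∑ i ∈ Finset.univ.erase (0 : Fin n), lam i * (E ⬝ᵥ q i) ^ 2
        - (2 * η / n) * (Kx.mulVec E ⬝ᵥ Y) := by
  have hn : (n : ℝ) ≠ 0 := Nat.cast_ne_zero.mpr (NeZero.ne n)
  have hηne : η ≠ 0 := ne_of_gt hη
  have hl0 : lam 0 ≠ 0 := ne_of_gt hlam1
  set u : Fin n → ℝ := Kx.mulVec E with hu
  -- eigenvector property in dot-product form
  have hKq : ∀ i, u ⬝ᵥ q i = lam i * (E ⬝ᵥ q i) := by
    intro i
    calc u ⬝ᵥ q i = q i ⬝ᵥ Kx.mulVec E := dotProduct_comm _ _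
      _ = Kx.vecMul (q i) ⬝ᵥ E := by rw [dotProduct_mulVec]
      _ = Kx.mulVec (q i) ⬝ᵥ E := by rw [← hK.eq, Matrix.mulVec_transpose, hK.eq]
      _ = (lam i • q i) ⬝ᵥ E := by rw [heig]
      _ = lam i * (E ⬝ᵥ q i) := by rw [smul_dotProduct, smul_eq_mul, dotProduct_comm]
  -- Parseval via the orthogonal matrix with rows `q i`
  have key : ∀ w w' : Fin n → ℝ,
      ∑ i, (w ⬝ᵥ q i) * (w' ⬝ᵥ q i) = w ⬝ᵥ w' := by
    intro w w'
    set Q : Matrix (Fin n) (Fin n) ℝ := Matrix.of q with hQdef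
    have hQQt : Q * Qᵀ = 1 := by
      ext i j
      simp only [Matrix.mul_apply, Matrix.transpose_apply, hQdef, Matrix.of_apply,
        Matrix.one_apply]
      simpa [dotProduct] using horth i j
    have hQtQ : Qᵀ * Q = 1 := mul_eq_one_comm.mp hQQt
    have hmv : ∀ z : Fin n → ℝ, Q.mulVec z = fun i => q i ⬝ᵥ z := by
      intro z; funext i; simp [Matrix.mulVec, hQdef, dotProduct]
    calc ∑ i, (w ⬝ᵥ q i) * (w' ⬝ᵥ q i)
        = Q.mulVec w ⬝ᵥ Q.mulVec w' := by
          simp only [hmv, dotProduct]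
          refine Finset.sum_congr rfl fun i _ => ?_
          congr 1 <;> exact Finset.sum_congr rfl fun j _ => mul_comm _ _
      _ = Q.vecMul (Q.mulVec w) ⬝ᵥ w' := by rw [dotProduct_mulVec]
      _ = (Qᵀ * Q).mulVec w ⬝ᵥ w' := by
          rw [← Matrix.mulVec_transpose, ← Matrix.mulVec_mulVec]
      _ = w ⬝ᵥ w' := by rw [hQtQ, Matrix.one_mulVec]
  -- spectral expansions
  have hEu : E ⬝ᵥ u = ∑ i, lam i * (E ⬝ᵥ q i) ^ 2 := by
    rw [← key E u]
    refine Finset.sum_congr rfl fun i _ => ?_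
    rw [hKq i]; ring
  have huu : u ⬝ᵥ u = ∑ i, lam i ^ 2 * (E ⬝ᵥ q i) ^ 2 := by
    rw [← key u u]
    refine Finset.sum_congr rfl fun i _ => ?_
    rw [hKq i]; ring
  -- split off the 0-th term
  have hsplit : ∀ f : Fin n → ℝ,
      ∑ i, f i = f 0 + ∑ i ∈ Finset.univ.erase (0 : Fin n), f i := by
    intro f
    rw [Finset.add_sum_erase _ f (Finset.mem_univ 0)]
  have hEu' : E ⬝ᵥ u = lam 0 * (E ⬝ᵥ q 0) ^ 2
      + ∑ i ∈ Finset.univ.erase (0 : Fin n), lam i * (E ⬝ᵥ q i) ^ 2 := by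
    rw [hEu]; exact hsplit _
  have huu' : u ⬝ᵥ u = lam 0 ^ 2 * (E ⬝ᵥ q 0) ^ 2
      + ∑ i ∈ Finset.univ.erase (0 : Fin n), lam i ^ 2 * (E ⬝ᵥ q i) ^ 2 := by
    rw [huu]; exact hsplit _
  -- relation c * (v ⬝ᵥ u) = E ⬝ᵥ u + Y ⬝ᵥ u
  have hcv : c * (v ⬝ᵥ u) = E ⬝ᵥ u + Y ⬝ᵥ u := by
    have : c • v = E + Y := by rw [hE, hF]; abel
    calc c * (v ⬝ᵥ u) = (c • v) ⬝ᵥ u := by rw [smul_dotProduct, smul_eq_mul]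
      _ = (E + Y) ⬝ᵥ u := by rw [this]
      _ = E ⬝ᵥ u + Y ⬝ᵥ u := add_dotProduct _ _ _
  -- expansion of the left-hand side
  have hlhs : v' ⬝ᵥ v' - v ⬝ᵥ v
      = -2 * ((η / n) * c) * (v ⬝ᵥ u) + ((η / n) * c) ^ 2 * (u ⬝ᵥ u) := by
    rw [hv']
    simp only [← hu, sub_dotProduct, dotProduct_sub, smul_dotProduct, dotProduct_smul,
      smul_eq_mul]
    rw [dotProduct_comm u v]
    ring
  -- the ΔE term on the RHS
  have hYu : Kx.mulVec E ⬝ᵥ Y = Y ⬝ᵥ u := by rw [← hu, dotProduct_comm]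
  -- pull constants out of the first RHS sum
  have hsum1 : ∑ i ∈ Finset.univ.erase (0 : Fin n), (lam i ^ 2 / lam 0) * (E ⬝ᵥ q i) ^ 2
      = (∑ i ∈ Finset.univ.erase (0 : Fin n), lam i ^ 2 * (E ⬝ᵥ q i) ^ 2) / lam 0 := by
    rw [Finset.sum_div]
    refine Finset.sum_congr rfl fun i _ => ?_
    ring
  set S1 := ∑ i ∈ Finset.univ.erase (0 : Fin n), lam i ^ 2 * (E ⬝ᵥ q i) ^ 2 with hS1
  set S2 := ∑ i ∈ Finset.univ.erase (0 : Fin n), lam i * (E ⬝ᵥ q i) ^ 2 with hS2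
  rw [hlhs, hsum1, hYu, hΔ]
  -- eliminate v ⬝ᵥ u using hcv, then substitute spectral expansions
  have hvu : -2 * ((η / n) * c) * (v ⬝ᵥ u) = -2 * (η / n) * (E ⬝ᵥ u + Y ⬝ᵥ u) := by
    have : -2 * ((η / n) * c) * (v ⬝ᵥ u) = -2 * (η / n) * (c * (v ⬝ᵥ u)) := by ring
    rw [this, hcv]
  rw [hvu, hEu', huu']
  field_simp
  ring
end

section
/- Let n be a positive integer, η > 0, Y ∈ ℝⁿ, c ∈ ℝ, v ∈ ℝⁿ. Let K_x ∈ ℝ^{n×n} be symmetric with an orthonormal basis of eigenvectors q₁,…,q_n and corresponding eigenvalues λ₁,…,λ_n, where λ₁ > 0 and λ_i ≥ 0 for all i. Set F = c·v, E = F − Y, v' = v − (η/n)·c·(K_x E), and Δ := (λ₁/n)·c² − 2/η. Assume Δ > 0 and Δ·η·λ₁·⟨E, q₁⟩² > 2·Σ_{i=2}^{n} λ_i·⟨E, q_i⟩² + 2·λ₁·⟨E, q₁⟩·⟨Y, q₁⟩ + 2·Σ_{i=2}^{n} λ_i·⟨E, q_i⟩·⟨Y, q_i⟩. Then ‖v'‖²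 > ‖v‖². -/
open Matrix

/-- In Phase III of the Edge-of-Stability dynamics (`Δ > 0` and the `⟨E,q₁⟩²`
term dominating), `‖v‖²` strictly increases in one gradient-descent step. -/
theorem v_sq_increases_phase_III
    (n : ℕ) [NeZero n] (η : ℝ) (hη : 0 < η)
    (Y : Fin n → ℝ) (c : ℝ) (v : Fin n → ℝ)
    (Kx : Matrix (Fin n) (Fin n) ℝ) (hK : Kx.IsSymm)
    (q : Fin n → Fin n → ℝ) (lam : Fin n → ℝ)
    (horth : ∀ i j, q i ⬝ᵥ q j = if i = j then (1 : ℝ) else 0)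
    (heig : ∀ i, Kx.mulVec (q i) = lam i • q i)
    (hlam1 : 0 < lam 0) (hlam : ∀ i, 0 ≤ lam i)
    (F E : Fin n → ℝ) (hF : F = c • v) (hE : E = F - Y)
    (v' : Fin n → ℝ) (hv' : v' = v - ((η / n) * c) • Kx.mulVec E)
    (Δ : ℝ) (hΔ : Δ = (lam 0 / n) * c ^ 2 - 2 / η) (hΔpos : 0 < Δ)
    (hdom : Δ * η * lam 0 * (E ⬝ᵥ q 0) ^ 2 >
        2 * ∑ i ∈ Finset.univ.erase (0 : Fin n), lam i * (E ⬝ᵥ q i) ^ 2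
        + 2 * lam 0 * (E ⬝ᵥ q 0) * (Y ⬝ᵥ q 0)
        + 2 * ∑ i ∈ Finset.univ.erase (0 : Fin n),
            lam i * (E ⬝ᵥ q i) * (Y ⬝ᵥ q i)) :
    v ⬝ᵥ v < v' ⬝ᵥ v' := by
  have hn : (0:ℝ) < n := by
    have := Nat.pos_of_ne_zero (NeZero.ne n)
    exact_mod_cast this
  have hn0 : (n:ℝ) ≠ 0 := ne_of_gt hn
  have hη0 : η ≠ 0 := ne_of_gt hη
  -- c² > 0
  have hc2 : 0 < c ^ 2 := by
    by_contra h
    push_neg at h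
    have h2 : 0 < 2 / η := by positivity
    have hln : 0 < lam 0 / n := div_pos hlam1 hn
    nlinarith [hΔpos, hΔ]
  -- Parseval
  set P : Matrix (Fin n) (Fin n) ℝ := Matrix.of q with hP
  have hPPt : P * Pᵀ = 1 := by
    ext i j
    have := horth i j
    simpa [Matrix.mul_apply, Matrix.one_apply, hP, dotProduct] using this
  have hPtP : Pᵀ * P = 1 := mul_eq_one_comm.mp hPPt
  have parseval : ∀ u w : Fin n → ℝ,
      u ⬝ᵥ w = ∑ i, (q i ⬝ᵥ u) * (q i ⬝ᵥ w) := by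
    intro u w
    have h1 : u ⬝ᵥ w = u ⬝ᵥ ((Pᵀ * P).mulVec w) := by rw [hPtP]; simp
    rw [h1, ← Matrix.mulVec_mulVec, Matrix.dotProduct_mulVec,
      Matrix.vecMul_transpose]
    simp [Matrix.mulVec, dotProduct, hP]
  -- eigen action on dot products
  have hqKE : ∀ i, q i ⬝ᵥ Kx.mulVec E = lam i * (E ⬝ᵥ q i) := by
    intro i
    rw [Matrix.dotProduct_mulVec]
    have hv : Matrix.vecMul (q i) Kx = lam i • q i := by
      rw [← Matrix.mulVec_transpose, hK.eq, heig]
    rw [hv, smul_dotProduct, smul_eq_mul, dotProduct_comm]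
  -- c * ⟨q i, v⟩ = ⟨E,q i⟩ + ⟨Y,q i⟩
  have hcv : ∀ i, c * (q i ⬝ᵥ v) = E ⬝ᵥ q i + Y ⬝ᵥ q i := by
    intro i
    have hEY : c • v = E + Y := by rw [hE, hF]; abel
    have : q i ⬝ᵥ (c • v) = q i ⬝ᵥ (E + Y) := by rw [hEY]
    simpa [dotProduct_smul, dotProduct_add, smul_eq_mul,
      dotProduct_comm (q i) E, dotProduct_comm (q i) Y] using this
  -- coordinates of v'
  have hs' : ∀ i, q i ⬝ᵥ v' =
      q i ⬝ᵥ v - ((η / n) * c) * (lam i * (E ⬝ᵥ q i)) := by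
    intro i
    rw [hv']
    rw [dotProduct_sub, dotProduct_smul, smul_eq_mul, hqKE]
  set e : Fin n → ℝ := fun i => E ⬝ᵥ q i with he
  set y : Fin n → ℝ := fun i => Y ⬝ᵥ q i with hy
  set b : ℝ := (η / n) * c ^ 2 with hbdef
  have hb : 0 < b := mul_pos (div_pos hη hn) hc2
  have hb_lam : b * lam 0 = η * Δ + 2 := by
    rw [hbdef, hΔ]
    field_simp
    ring
  -- the per-coordinate quantity h
  set h : Fin n → ℝ := fun i =>
    b * (lam i) ^ 2 * (e i) ^ 2 - 2 * lam i * e i * (e i + y i) with hh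
  -- sum of h is positive
  have hsum_h : 0 < ∑ i, h i := by
    have hsplit : ∑ i, h i = h 0 + ∑ i ∈ Finset.univ.erase (0 : Fin n), h i :=
      (Finset.add_sum_erase _ h (Finset.mem_univ 0)).symm
    have h0eq : h 0 = η * Δ * lam 0 * (e 0) ^ 2 - 2 * lam 0 * e 0 * y 0 := by
      simp only [hh]
      linear_combination (lam 0 * (e 0) ^ 2) * hb_lam
    have htail : ∑ i ∈ Finset.univ.erase (0 : Fin n),
        (-(2 * (lam i * (e i) ^ 2)) - 2 * (lam i * e i * y i)) ≤
        ∑ i ∈ Finset.univ.erase (0 : Fin n), h i := by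
      apply Finset.sum_le_sum
      intro i _
      have h1 : 0 ≤ b * (lam i) ^ 2 * (e i) ^ 2 := by positivity
      simp only [hh]
      nlinarith
    have htail' : ∑ i ∈ Finset.univ.erase (0 : Fin n),
        (-(2 * (lam i * (e i) ^ 2)) - 2 * (lam i * e i * y i)) =
        -(2 * ∑ i ∈ Finset.univ.erase (0 : Fin n), lam i * (e i) ^ 2)
        - 2 * ∑ i ∈ Finset.univ.erase (0 : Fin n), lam i * e i * y i := by
      rw [Finset.sum_sub_distrib, Finset.mul_sum, Finset.mul_sum, Finset.sum_neg_distrib]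
    rw [hsplit, h0eq]
    rw [htail'] at htail
    simp only [he, hy] at *
    linarith [hdom, htail]
  -- conclude
  rw [parseval v v, parseval v' v', ← sub_pos, ← Finset.sum_sub_distrib]
  have hkey : c ^ 2 * ∑ i, ((q i ⬝ᵥ v') * (q i ⬝ᵥ v') - (q i ⬝ᵥ v) * (q i ⬝ᵥ v))
      = b * ∑ i, h i := by
    rw [Finset.mul_sum, Finset.mul_sum]
    apply Finset.sum_congr rfl
    intro i _
    rw [hs' i]
    have hcvi := hcv i
    have hca : c * ((η / n) * c) = b := by rw [hbdef]; ring
    simp only [hh, he, hy]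
    linear_combination
      ((c * ((η / n) * c) + b) * (lam i) ^ 2 * (E ⬝ᵥ q i) ^ 2
        - 2 * lam i * (E ⬝ᵥ q i) * (c * (q i ⬝ᵥ v))) * hca
      + (-(2 * lam i * (E ⬝ᵥ q i) * b)) * hcvi
  have hpos : 0 < c ^ 2 * ∑ i, ((q i ⬝ᵥ v') * (q i ⬝ᵥ v') - (q i ⬝ᵥ v) * (q i ⬝ᵥ v)) := by
    rw [hkey]; exact mul_pos hb hsum_h
  nlinarith [hpos, hc2]
end

section
/- Let n be a positive integer, η > 0, Y ∈ ℝⁿ, and let K_x ∈ ℝ^{n×n} be symmetric with an orthonormal basis of eigenvectors q₁,…,q_n and eigenvalues λ₁,…,λ_n satisfying λ_i > 0 for all i. Suppose c : ℝ → ℝ and v : ℝ → ℝⁿ are differentiable and satisfy dc/dt = −(η/n)·⟨E_t, v_t⟩ and dv/dt = −(η/n)·c_t·(K_x E_t), with F_t = c_t·v_t and E_t = F_t − Y. Fix a time t, and assume ⟨E_t, q_i⟩·⟨F_t, q_i⟩ ≤ 0 for all i, with strict inequality for at least one i. Then d(c_t²)/dt > 0 and d(‖v_t‖²)/dt > 0.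 -/
/-!
Along the flow, `d(c²)/dt = 2 c ċ = -(2η/n) ⟨E, F⟩` and
`d‖v‖²/dt = 2 ⟨v, v̇⟩ = -(2η/n) ⟨F, K_x E⟩`. Expanding `E` in the eigenbasis turns these into
`-(2η/n) ∑ᵢ ⟨E, qᵢ⟩⟨F, qᵢ⟩` and `-(2η/n) ∑ᵢ λᵢ ⟨E, qᵢ⟩⟨F, qᵢ⟩`, and the sign condition
together with `λᵢ > 0` makes both sums negative.
-/

open Matrix

section Orthonormal

variable {ι : Type*} [Fintype ι] [DecidableEq ι] {q : ι → ι → ℝ}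

theorem sum_dotProduct_smul_eq_self_of_orthonormal
    (horth : ∀ i j, q i ⬝ᵥ q j = if i = j then (1 : ℝ) else 0) (x : ι → ℝ) :
    ∑ i, (q i ⬝ᵥ x) • q i = x := by
  have hrows : of q * (of q)ᵀ = 1 := by
    ext i j
    simpa [mul_apply, one_apply, dotProduct] using horth i j
  calc ∑ i, (q i ⬝ᵥ x) • q i = (of q)ᵀ *ᵥ (of q *ᵥ x) := by
        rw [mulVec_transpose, vecMul_eq_sum]; rfl
    _ = x := by rw [mulVec_mulVec, mul_eq_one_comm.mp hrows, one_mulVec]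

theorem dotProduct_eq_sum_of_orthonormal
    (horth : ∀ i j, q i ⬝ᵥ q j = if i = j then (1 : ℝ) else 0) (x y : ι → ℝ) :
    y ⬝ᵥ x = ∑ i, (x ⬝ᵥ q i) * (y ⬝ᵥ q i) := by
  conv_lhs => rw [← sum_dotProduct_smul_eq_self_of_orthonormal horth x]
  simp only [dotProduct_sum, dotProduct_smul, smul_eq_mul, dotProduct_comm (q _) x]

theorem dotProduct_mulVec_eq_sum_of_orthonormal_eigenvectors
    (horth : ∀ i j, q i ⬝ᵥ q j = if i = j then (1 : ℝ) else 0)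
    {K : Matrix ι ι ℝ} {lam : ι → ℝ} (heig : ∀ i, K *ᵥ q i = lam i • q i) (x y : ι → ℝ) :
    y ⬝ᵥ (K *ᵥ x) = ∑ i, lam i * ((x ⬝ᵥ q i) * (y ⬝ᵥ q i)) := by
  conv_lhs => rw [← sum_dotProduct_smul_eq_self_of_orthonormal horth x]
  simp only [mulVec_sum, mulVec_smul, heig, dotProduct_sum, dotProduct_smul, smul_eq_mul,
    dotProduct_comm (q _) x]
  exact Finset.sum_congr rfl fun i _ => by ring

end Orthonormal

theorem Finset.sum_mul_neg_of_pos_of_nonpos {ι : Type*} [Fintype ι] {w a : ι → ℝ}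
    (hw : ∀ i, 0 < w i) (ha : ∀ i, a i ≤ 0) (h : ∃ i, a i < 0) : ∑ i, w i * a i < 0 := by
  obtain ⟨i₀, hi₀⟩ := h
  exact Finset.sum_neg' (fun i _ => mul_nonpos_of_nonneg_of_nonpos (hw i).le (ha i))
    ⟨i₀, Finset.mem_univ _, mul_neg_of_pos_of_neg (hw i₀) hi₀⟩

theorem HasDerivAt.dotProduct {ι : Type*} [Fintype ι] {f g : ℝ → ι → ℝ} {f' g' : ι → ℝ}
    {t : ℝ} (hf : HasDerivAt f f' t) (hg : HasDerivAt g g' t) :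
    HasDerivAt (fun s => f s ⬝ᵥ g s) (f' ⬝ᵥ g t + f t ⬝ᵥ g') t := by
  simp only [_root_.dotProduct, ← Finset.sum_add_distrib]
  exact HasDerivAt.fun_sum fun j _ => (hasDerivAt_pi.mp hf j).fun_mul (hasDerivAt_pi.mp hg j)

theorem phase_I_c_sq_v_sq_increase_general
    (n : ℕ) (hn : 0 < n) (η : ℝ) (hη : 0 < η)
    (Kx : Matrix (Fin n) (Fin n) ℝ)
    (q : Fin n → Fin n → ℝ) (lam : Fin n → ℝ)
    (horth : ∀ i j, q i ⬝ᵥ q j = if i = j then (1 : ℝ) else 0)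
    (heig : ∀ i, Kx.mulVec (q i) = lam i • q i)
    (hlam : ∀ i, 0 < lam i)
    (c : ℝ → ℝ) (v : ℝ → Fin n → ℝ)
    (F E : ℝ → Fin n → ℝ)
    (hF : ∀ t, F t = c t • v t)
    (hc : ∀ t, HasDerivAt c (-(η / n) * (E t ⬝ᵥ v t)) t)
    (hv : ∀ t, HasDerivAt v (-((η / n) * c t) • Kx.mulVec (E t)) t)
    (t : ℝ)
    (hsign : ∀ i, (E t ⬝ᵥ q i) * (F t ⬝ᵥ q i) ≤ 0)
    (hstrict : ∃ i, (E t ⬝ᵥ q i) * (F t ⬝ᵥ q i) < 0) :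
    0 < deriv (fun s => c s ^ 2) t ∧ 0 < deriv (fun s => v s ⬝ᵥ v s) t := by
  have hrate : 0 < 2 * (η / n) := by positivity
  have hEF : ∑ i, (E t ⬝ᵥ q i) * (F t ⬝ᵥ q i) < 0 := by
    simpa using Finset.sum_mul_neg_of_pos_of_nonpos (fun _ => one_pos) hsign hstrict
  have hEKF : ∑ i, lam i * ((E t ⬝ᵥ q i) * (F t ⬝ᵥ q i)) < 0 :=
    Finset.sum_mul_neg_of_pos_of_nonpos hlam hsign hstrict
  have hc_sq : deriv (fun s => c s ^ 2) t = -(2 * (η / n)) * (F t ⬝ᵥ E t) := by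
    rw [((hc t).fun_pow 2).deriv, hF, smul_dotProduct, smul_eq_mul, dotProduct_comm]
    push_cast
    ring
  have hv_sq : deriv (fun s => v s ⬝ᵥ v s) t = -(2 * (η / n)) * (F t ⬝ᵥ (Kx *ᵥ E t)) := by
    rw [((hv t).dotProduct (hv t)).deriv, dotProduct_comm _ (v t), hF, dotProduct_smul,
      smul_dotProduct, smul_eq_mul, smul_eq_mul]
    ring
  rw [hc_sq, hv_sq, dotProduct_eq_sum_of_orthonormal horth,
    dotProduct_mulVec_eq_sum_of_orthonormal_eigenvectors horth heig]
  exact ⟨mul_pos_of_neg_of_neg (neg_neg_of_pos hrate) hEF,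
    mul_pos_of_neg_of_neg (neg_neg_of_pos hrate) hEKF⟩

/-- Phase-I mechanism: if along every kernel eigendirection the error and
output components have opposite signs (strictly for at least one direction),
then both `c²` and `‖v‖²` are strictly increasing under gradient flow. -/
theorem phase_I_c_sq_v_sq_increase
    (n : ℕ) (hn : 0 < n) (η : ℝ) (hη : 0 < η)
    (Y : Fin n → ℝ) (Kx : Matrix (Fin n) (Fin n) ℝ) (hK : Kx.IsSymm)
    (q : Fin n → Fin n → ℝ) (lam : Fin n → ℝ)
    (horth : ∀ i j, q i ⬝ᵥ q j = if i = j then (1 : ℝ) else 0)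
    (heig : ∀ i, Kx.mulVec (q i) = lam i • q i)
    (hlam : ∀ i, 0 < lam i)
    (c : ℝ → ℝ) (v : ℝ → Fin n → ℝ)
    (F E : ℝ → Fin n → ℝ)
    (hF : ∀ t, F t = c t • v t) (hE : ∀ t, E t = F t - Y)
    (hc : ∀ t, HasDerivAt c (-(η / n) * (E t ⬝ᵥ v t)) t)
    (hv : ∀ t, HasDerivAt v (-((η / n) * c t) • Kx.mulVec (E t)) t)
    (t : ℝ)
    (hsign : ∀ i, (E t ⬝ᵥ q i) * (F t ⬝ᵥ q i) ≤ 0)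
    (hstrict : ∃ i, (E t ⬝ᵥ q i) * (F t ⬝ᵥ q i) < 0) :
    0 < deriv (fun s => c s ^ 2) t ∧ 0 < deriv (fun s => v s ⬝ᵥ v s) t :=
  phase_I_c_sq_v_sq_increase_general n hn η hη Kx q lam horth heig hlam c v F E hF hc hv t hsign
    hstrict
end

section
/- Let E, Y be vectors in a real inner product space with Y ≠ 0, set F = E + Y and Ŷ = Y/‖Y‖. If ⟨E, F⟩ < 0, then |⟨E, F⟩| ≤ 2·|⟨E, Ŷ⟩|·|⟨F, Ŷ⟩|. -/
open scoped InnerProductSpace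

/-!
Write `u = Ŷ` and `F = E + c • u` with `c = ‖Y‖`. Then
`⟪E, F⟫ - ⟪E, u⟫ ⟪F, u⟫ = ‖E‖² - ⟪E, u⟫²`, which is nonnegative by Cauchy–Schwarz since
`‖u‖ = 1`. Hence when `⟪E, F⟫ < 0`, `|⟪E, F⟫| ≤ -⟪E, u⟫ ⟪F, u⟫ ≤ |⟪E, u⟫| |⟪F, u⟫|`.
-/

section

variable {V : Type*} [NormedAddCommGroup V] [InnerProductSpace ℝ V]

theorem inner_mul_inner_le_inner_add_smul {u : V} (hu : ‖u‖ = 1) (E : V) (c : ℝ) :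
    ⟪E, u⟫_ℝ * ⟪E + c • u, u⟫_ℝ ≤ ⟪E, E + c • u⟫_ℝ := by
  have cauchy_schwarz : ⟪E, u⟫_ℝ * ⟪E, u⟫_ℝ ≤ ⟪E, E⟫_ℝ := by
    simpa [real_inner_self_eq_norm_sq, hu] using real_inner_mul_inner_self_le E u
  have huu : ⟪u, u⟫_ℝ = 1 := by rw [real_inner_self_eq_norm_sq, hu, one_pow]
  rw [inner_add_left, inner_add_right, real_inner_smul_left, real_inner_smul_right, huu]
  linarith

theorem abs_inner_le_abs_inner_mul_abs_inner_of_inner_neg {u E F : V} (hu : ‖u‖ = 1) (c : ℝ)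
    (hF : F = E + c • u) (h : ⟪E, F⟫_ℝ < 0) :
    |⟪E, F⟫_ℝ| ≤ |⟪E, u⟫_ℝ| * |⟪F, u⟫_ℝ| := by
  subst hF
  calc |⟪E, E + c • u⟫_ℝ| = -⟪E, E + c • u⟫_ℝ := abs_of_neg h
    _ ≤ -(⟪E, u⟫_ℝ * ⟪E + c • u, u⟫_ℝ) := neg_le_neg (inner_mul_inner_le_inner_add_smul hu E c)
    _ ≤ |⟪E, u⟫_ℝ * ⟪E + c • u, u⟫_ℝ| := neg_le_abs _
    _ = |⟪E, u⟫_ℝ| * |⟪E + c • u, u⟫_ℝ| := abs_mul _ _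

end

/-- Geometric bound on `|⟨E, F⟩|` via the components of `E` and `F` along
the (normalized) target direction, when `⟨E, F⟩ < 0`. -/
theorem inner_EF_le_target_components
    {V : Type*} [NormedAddCommGroup V] [InnerProductSpace ℝ V]
    (E Y : V) (hY : Y ≠ 0)
    (F : V) (hF : F = E + Y)
    (Yhat : V) (hYhat : Yhat = ‖Y‖⁻¹ • Y)
    (h : ⟪E, F⟫_ℝ < 0) :
    |⟪E, F⟫_ℝ| ≤ 2 * |⟪E, Yhat⟫_ℝ| * |⟪F, Yhat⟫_ℝ| := by
  have hunit : ‖Yhat‖ = 1 := hYhat ▸ norm_smul_inv_norm hY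
  have hF_smul : F = E + ‖Y‖ • Yhat := by
    rw [hF, hYhat, smul_inv_smul₀ (norm_ne_zero_iff.mpr hY)]
  have hbound := abs_inner_le_abs_inner_mul_abs_inner_of_inner_neg hunit _ hF_smul h
  linarith [mul_nonneg (abs_nonneg ⟪E, Yhat⟫_ℝ) (abs_nonneg ⟪F, Yhat⟫_ℝ)]
end

section
/- Let n be a positive integer, η > 0, Y ∈ ℝⁿ, K_x ∈ ℝ^{n×n} symmetric, and let q ∈ ℝⁿ be a unit eigenvector of K_x with eigenvalue λ, i.e. K_x q = λ q. Let c ∈ ℝ with c ≠ 0 and v ∈ ℝⁿ; set F = c·v, E = F − Y, c' = c − (η/n)·⟨E, v⟩, v' = v − (η/n)·c·(K_x E), and E' = c'·v' − Y. Then ⟨E', q⟩ = ( 1 − (ηλ/n)·c² − (η/(n c²))·⟨E, F⟩ + (η²λ/n²)·⟨E, F⟩ )·⟨E, q⟩ − (η/(n c²))·⟨E, F⟩·⟨Y, q⟩. -/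
/-!
By symmetry of `K`, the kernel term contributes `⟪K E, q⟫ = λ ⟪E, q⟫`; since `F = c v`, the remaining
inner products are `⟪E, v⟫ = ⟪E, F⟫ / c` and `⟪v, q⟫ = (⟪E, q⟫ + ⟪Y, q⟫) / c`. Expanding
`⟪c' v' - Y, q⟫` with these three facts is then a rational identity in `c`.
-/

open Matrix

theorem Matrix.IsSymm.mulVec_dotProduct_of_mulVec_eq_smul {ι R : Type*} [Fintype ι]
    [CommSemiring R] {K : Matrix ι ι R} (hK : K.IsSymm) {q : ι → R} {lam : R}
    (heig : K *ᵥ q = lam • q) (x : ι → R) :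
    K *ᵥ x ⬝ᵥ q = lam * (x ⬝ᵥ q) := by
  rw [dotProduct_comm, dotProduct_mulVec, ← mulVec_transpose, hK.eq, heig, smul_dotProduct,
    smul_eq_mul, dotProduct_comm]

/-- Here `a` is the normalized step size `η / n`. -/
theorem rankOne_step_error_dotProduct_eigenvector {ι 𝕜 : Type*} [Fintype ι] [Field 𝕜]
    {K : Matrix ι ι 𝕜} (hK : K.IsSymm) {q : ι → 𝕜} {lam : 𝕜} (heig : K *ᵥ q = lam • q)
    (a : 𝕜) {Y v F E : ι → 𝕜} {c : 𝕜} (hc : c ≠ 0) (hF : F = c • v) (hE : E = F - Y) :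
    ((c - a * (E ⬝ᵥ v)) • (v - (a * c) • K *ᵥ E) - Y) ⬝ᵥ q =
      (1 - a * lam * c ^ 2 - a / c ^ 2 * (E ⬝ᵥ F) + a ^ 2 * lam * (E ⬝ᵥ F)) * (E ⬝ᵥ q)
        - a / c ^ 2 * (E ⬝ᵥ F) * (Y ⬝ᵥ q) := by
  have hEv : E ⬝ᵥ v = (E ⬝ᵥ F) / c := by
    rw [hF, dotProduct_smul, smul_eq_mul]
    field_simp
  have hvq : v ⬝ᵥ q = ((E ⬝ᵥ q) + (Y ⬝ᵥ q)) / c := by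
    rw [hE, sub_dotProduct, sub_add_cancel, hF, smul_dotProduct, smul_eq_mul]
    field_simp
  rw [sub_dotProduct, smul_dotProduct, sub_dotProduct, smul_dotProduct,
    hK.mulVec_dotProduct_of_mulVec_eq_smul heig, hEv, hvq, smul_eq_mul, smul_eq_mul]
  field_simp
  ring

theorem error_component_one_step_recursion_general
    (n : ℕ) (η : ℝ)
    (Y : Fin n → ℝ) (Kx : Matrix (Fin n) (Fin n) ℝ) (hK : Kx.IsSymm)
    (q : Fin n → ℝ)
    (lam : ℝ) (heig : Kx.mulVec q = lam • q)
    (c : ℝ) (hc : c ≠ 0) (v : Fin n → ℝ)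
    (F E : Fin n → ℝ) (hF : F = c • v) (hE : E = F - Y)
    (c' : ℝ) (hc' : c' = c - (η / n) * (E ⬝ᵥ v))
    (v' : Fin n → ℝ) (hv' : v' = v - ((η / n) * c) • Kx.mulVec E)
    (E' : Fin n → ℝ) (hE' : E' = c' • v' - Y) :
    E' ⬝ᵥ q =
      (1 - (η * lam / n) * c ^ 2 - (η / (n * c ^ 2)) * (E ⬝ᵥ F)
          + (η ^ 2 * lam / n ^ 2) * (E ⬝ᵥ F)) * (E ⬝ᵥ q)
        - (η / (n * c ^ 2)) * (E ⬝ᵥ F) * (Y ⬝ᵥ q) := by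
  subst hc' hv' hE'
  rw [show η * lam / n = η / n * lam by ring, show η / (n * c ^ 2) = η / n / c ^ 2 by ring,
    show η ^ 2 * lam / n ^ 2 = (η / n) ^ 2 * lam by ring]
  exact rankOne_step_error_dotProduct_eigenvector hK heig (η / n) hc hF hE

/-- Exact one-step recursion for the error component along a kernel
eigendirection under the rank-1 gradient-descent dynamics. -/
theorem error_component_one_step_recursion
    (n : ℕ) (hn : 0 < n) (η : ℝ) (hη : 0 < η)
    (Y : Fin n → ℝ) (Kx : Matrix (Fin n) (Fin n) ℝ) (hK : Kx.IsSymm)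
    (q : Fin n → ℝ) (hq : q ⬝ᵥ q = 1)
    (lam : ℝ) (heig : Kx.mulVec q = lam • q)
    (c : ℝ) (hc : c ≠ 0) (v : Fin n → ℝ)
    (F E : Fin n → ℝ) (hF : F = c • v) (hE : E = F - Y)
    (c' : ℝ) (hc' : c' = c - (η / n) * (E ⬝ᵥ v))
    (v' : Fin n → ℝ) (hv' : v' = v - ((η / n) * c) • Kx.mulVec E)
    (E' : Fin n → ℝ) (hE' : E' = c' • v' - Y) :
    E' ⬝ᵥ q =
      (1 - (η * lam / n) * c ^ 2 - (η / (n * c ^ 2)) * (E ⬝ᵥ F)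
          + (η ^ 2 * lam / n ^ 2) * (E ⬝ᵥ F)) * (E ⬝ᵥ q)
        - (η / (n * c ^ 2)) * (E ⬝ᵥ F) * (Y ⬝ᵥ q) :=
  error_component_one_step_recursion_general n η Y Kx hK q lam heig c hc v F E hF hE c' hc' v' hv'
    E' hE'
end

section
/- Let n be a positive integer, η > 0, Y ∈ ℝⁿ, K_x ∈ ℝ^{n×n} symmetric, and let q₁ ∈ ℝⁿ be a unit eigenvector of K_x with eigenvalue λ₁ > 0. Let c ∈ ℝ with c ≠ 0 and v ∈ ℝⁿ; set F = c·v, E = F − Y, c' = c − (η/n)·⟨E, v⟩, v' = v − (η/n)·c·(K_x E), E' = c'·v' − Y, and Δ := (λ₁/n)·c² − 2/η. If Δ ≥ 0 and ⟨E, F⟩ ≤ 0, then |⟨E', q₁⟩| ≥ (1 + ηΔ)·|⟨E, q₁⟩| − (η²λ₁)/(n²(2 + ηΔ))·|⟨E, F⟩|·|⟨Y, q₁⟩|. -/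
open Matrix

set_option maxHeartbeats 1000000 in
/-- Phase-II growth bound (exact-constant version): when `Δ ≥ 0` and
`⟨E, F⟩ ≤ 0`, the error component along the top eigendirection grows by a
factor at least `1 + ηΔ`, up to an explicit correction term. -/
theorem error_top_component_growth
    (n : ℕ) (hn : 0 < n) (η : ℝ) (hη : 0 < η)
    (Y : Fin n → ℝ) (Kx : Matrix (Fin n) (Fin n) ℝ) (hK : Kx.IsSymm)
    (q1 : Fin n → ℝ) (hq1 : q1 ⬝ᵥ q1 = 1)
    (lam1 : ℝ) (hlam1 : 0 < lam1) (heig : Kx.mulVec q1 = lam1 • q1)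
    (c : ℝ) (hc : c ≠ 0) (v : Fin n → ℝ)
    (F E : Fin n → ℝ) (hF : F = c • v) (hE : E = F - Y)
    (c' : ℝ) (hc' : c' = c - (η / n) * (E ⬝ᵥ v))
    (v' : Fin n → ℝ) (hv' : v' = v - ((η / n) * c) • Kx.mulVec E)
    (E' : Fin n → ℝ) (hE' : E' = c' • v' - Y)
    (Δ : ℝ) (hΔ : Δ = (lam1 / n) * c ^ 2 - 2 / η)
    (hΔnonneg : 0 ≤ Δ) (hEF : E ⬝ᵥ F ≤ 0) :
    |E' ⬝ᵥ q1| ≥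
      (1 + η * Δ) * |E ⬝ᵥ q1|
        - (η ^ 2 * lam1) / (n ^ 2 * (2 + η * Δ)) * |E ⬝ᵥ F| * |Y ⬝ᵥ q1| := by
  set N : ℝ := (n : ℝ) with hN
  have hNpos : 0 < N := by positivity
  have hN0 : N ≠ 0 := ne_of_gt hNpos
  have hη0 : η ≠ 0 := ne_of_gt hη
  set a : ℝ := E ⬝ᵥ q1 with ha
  set y : ℝ := Y ⬝ᵥ q1 with hy
  set w : ℝ := v ⬝ᵥ q1 with hw
  set s : ℝ := E ⬝ᵥ v with hs
  have ht : E ⬝ᵥ F = c * s := by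
    rw [hF, dotProduct_smul, smul_eq_mul, hs]
  have haw : a = c * w - y := by
    rw [ha, hE, hF, sub_dotProduct, smul_dotProduct, smul_eq_mul, ← hw, ← hy]
  have hKE : Kx.mulVec E ⬝ᵥ q1 = lam1 * a := by
    rw [dotProduct_comm, dotProduct_mulVec, ← mulVec_transpose, hK.eq, heig,
      smul_dotProduct, smul_eq_mul, dotProduct_comm, ← ha]
  set r : ℝ := η * (c * s) / (N * c ^ 2) with hr
  set u : ℝ := η ^ 2 * lam1 * (c * s) / N ^ 2 with hu
  -- key formula
  have hkey : E' ⬝ᵥ q1 = -(((1 + η * Δ) + r - u) * a + r * y) := by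
    have h1 : E' ⬝ᵥ q1 = (c - η / N * s) * (w - η / N * c * (lam1 * a)) - y := by
      rw [hE', sub_dotProduct, smul_dotProduct, smul_eq_mul, hv', sub_dotProduct,
        smul_dotProduct, smul_eq_mul, hKE, hc']
    rw [h1, hr, hu, haw, hΔ]
    field_simp
    ring
  -- sign facts
  have hcs : c * s ≤ 0 := by rw [← ht]; exact hEF
  have h1ηΔ : (0 : ℝ) ≤ 1 + η * Δ := by nlinarith [mul_nonneg hη.le hΔnonneg]
  have h2pos : (0 : ℝ) < 2 + η * Δ := by nlinarith [mul_nonneg hη.le hΔnonneg]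
  have hrneg : r ≤ 0 := by
    rw [hr]
    apply div_nonpos_of_nonpos_of_nonneg
    · exact mul_nonpos_of_nonneg_of_nonpos hη.le hcs
    · positivity
  have hru : 0 ≤ r - u := by
    have heq : r - u = -(η * (c * s)) * (1 + η * Δ) / (N * c ^ 2) := by
      rw [hr, hu, hΔ]
      field_simp
      ring
    rw [heq]
    apply div_nonneg _ (by positivity)
    exact mul_nonneg (by nlinarith) h1ηΔ
  have hcoefpos : 0 ≤ (1 + η * Δ) + r - u := by linarith
  -- correction term equality
  have hcorr : -r = (η ^ 2 * lam1) / (N ^ 2 * (2 + η * Δ)) * |E ⬝ᵥ F| := by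
    have hfac : N ^ 2 * (2 + η * Δ) = η * lam1 * c ^ 2 * N := by
      rw [hΔ]; field_simp; ring
    rw [ht, abs_of_nonpos hcs, hr, hfac]
    have hl0 : lam1 ≠ 0 := ne_of_gt hlam1
    field_simp
  -- final bound
  have habs : |E' ⬝ᵥ q1| ≥ ((1 + η * Δ) + r - u) * |a| - (-r) * |y| := by
    rw [hkey, abs_neg]
    calc |((1 + η * Δ) + r - u) * a + r * y|
        ≥ |((1 + η * Δ) + r - u) * a| - |r * y| := by
          have := abs_sub_abs_le_abs_sub (((1 + η * Δ) + r - u) * a) (-(r * y))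
          simp only [abs_neg, sub_neg_eq_add] at this
          linarith
      _ = ((1 + η * Δ) + r - u) * |a| - (-r) * |y| := by
          rw [abs_mul, abs_mul, abs_of_nonneg hcoefpos, abs_of_nonpos hrneg]
  have hfinal : (1 + η * Δ) * |a| ≤ ((1 + η * Δ) + r - u) * |a| :=
    mul_le_mul_of_nonneg_right (by linarith) (abs_nonneg a)
  have hy' : (-r) * |y| = (η ^ 2 * lam1) / (N ^ 2 * (2 + η * Δ)) * |E ⬝ᵥ F| * |y| := by
    rw [hcorr]
  rw [hy'] at habs
  linarith
end
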